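/- arXiv:1902.01062 — 3 statements merged into one kernel-verified Lean document; each statement's English description precedes it below -/
import Mathlib

section
/- Let g be a Steinhaus window and Λ ⊆ ℤ_M × ℤ_M. For k ∈ ℤ_M set A_k = {ℓ ∈ ℤ_M : (k,ℓ) ∈ Λ}, and let H = Φ_Λ Φ_Λ* − (|Λ|/M)·I_M. Then E[Tr(H²)] = (1/M)·Σ_{k∈ℤ_M} |A_k|·(M − |A_k|), and consequently E[Tr(H²)] ≤ |Λ|·(1 − |Λ|/M²). -/
open MeasureTheory ProbabilityTheory Complex Finset
open scoped Real BigOperators Classical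

noncomputable section

/-- Time–frequency shift `π(k,ℓ) g = M_ℓ T_k g`. -/
def tfShift (M : ℕ) (k l : ZMod M) (g : ZMod M → ℂ) : ZMod M → ℂ :=
  fun m => Complex.exp (2 * (Real.pi : ℂ) * Complex.I * (l.val : ℂ) * (m.val : ℂ) / (M : ℂ)) *
    g (m - k)

/-- Squared ℓ²-norm on ℂ^M. -/
def nsq (M : ℕ) [NeZero M] (x : ZMod M → ℂ) : ℝ :=
  ∑ m : ZMod M, ‖x m‖ ^ 2

/-- Inner product ⟨x,y⟩ = ∑ x(m)·conj(y(m)). -/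
def inn (M : ℕ) [NeZero M] (x y : ZMod M → ℂ) : ℂ :=
  ∑ m : ZMod M, x m * (starRingEnd ℂ) (y m)

/-- Frame operator Φ_Λ Φ_Λ^* of the Gabor system (g, Λ). -/
def frameOp (M : ℕ) [NeZero M] (Λ : Finset (ZMod M × ZMod M)) (g : ZMod M → ℂ) :
    Matrix (ZMod M) (ZMod M) ℂ :=
  fun m1 m2 => ∑ kl ∈ Λ,
    tfShift M kl.1 kl.2 g m1 * (starRingEnd ℂ) (tfShift M kl.1 kl.2 g m2)

/-- A Steinhaus window: g(m) = M^{-1/2} e^{2πi y_m} with y_m i.i.d. uniform on [0,1). -/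
def IsSteinhaus (M : ℕ) {Ω : Type*} [MeasurableSpace Ω] (P : Measure Ω)
    (g : Ω → ZMod M → ℂ) : Prop :=
  ∃ y : ZMod M → Ω → ℝ,
    (∀ m, Measurable (y m)) ∧
    iIndepFun y P ∧
    (∀ m, Measure.map (y m) P = volume.restrict (Set.Ico (0 : ℝ) 1)) ∧
    (∀ ω m, g ω m = (1 / Real.sqrt M : ℝ) *
      Complex.exp (2 * (Real.pi : ℂ) * Complex.I * (y m ω)))

/-- A complex Gaussian window g ~ CN(0, (1/M) I_M): the 2M real coordinates are
independent centered Gaussians of variance 1/(2M). -/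
def IsGaussianWindow (M : ℕ) {Ω : Type*} [MeasurableSpace Ω] (P : Measure Ω)
    (g : Ω → ZMod M → ℂ) : Prop :=
  ∃ u : ZMod M × Bool → Ω → ℝ,
    (∀ i, Measurable (u i)) ∧
    iIndepFun u P ∧
    (∀ i, Measure.map (u i) P = gaussianReal 0 (1 / (2 * M) : NNReal)) ∧
    (∀ ω m, g ω m = (u (m, false) ω : ℂ) + (u (m, true) ω : ℂ) * Complex.I)

/-! Write `g(m) = M^{-1/2} e(y_m)` with `e(t) = exp(2πit)` and `S = Φ_Λ Φ_Λ*`. The diagonal of `S`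
is the constant `|Λ|/M`, so `Tr(H²) = Σ_{m₁ ≠ m₂} S(m₁,m₂) S(m₂,m₁)`, and each such product
expands into terms `ψ((ℓ - ℓ')(m₁ - m₂)) g(m₁-k) ḡ(m₂-k) g(m₂-k') ḡ(m₁-k')` with `ψ` the standard
character of `ℤ_M`. As `m₁ ≠ m₂` and the phases are independent and uniform, this fourth moment is
`1/M²` if `k = k'` and `0` otherwise. Summing the character over `m₁ ≠ m₂` gives
`M (M [ℓ = ℓ'] - 1)`, which leaves `(1/M) Σ_k |A_k| (M - |A_k|)`; the bound is Cauchy–Schwarz,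
`(Σ_k |A_k|)² ≤ M Σ_k |A_k|²`. -/

open ComplexConjugate

lemma integral_exp_two_pi_I_int_mul_Ico (n : ℤ) :
    ∫ t in Set.Ico (0 : ℝ) 1, exp (2 * π * I * n * t) = if n = 0 then 1 else 0 := by
  split_ifs with hn
  · simp [hn]
  have hc : 2 * π * I * n ≠ 0 := by simp [Real.pi_ne_zero, I_ne_zero, hn]
  rw [integral_Ico_eq_integral_Ioo, ← integral_Ioc_eq_integral_Ioo,
    ← intervalIntegral.integral_of_le zero_le_one, integral_exp_mul_complex hc]
  simp [show 2 * π * I * n = n * (2 * π * I) by ring, exp_int_mul_two_pi_mul_I]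

lemma integrable_exp_two_pi_I_mul {Ω : Type*} [MeasurableSpace Ω] {P : Measure Ω}
    [IsFiniteMeasure P] {f : Ω → ℝ} (hf : Measurable f) :
    Integrable (fun ω => exp (2 * π * I * f ω)) P := by
  refine Integrable.of_bound (by fun_prop) 1 (ae_of_all _ fun ω => ?_)
  rw [norm_exp]
  simp

section UniformPhases

variable {Ω ι : Type*} [MeasurableSpace Ω] {P : Measure Ω} [Fintype ι] {y : ι → Ω → ℝ}

lemma integral_prod_exp_of_iIndepFun_uniform (hym : ∀ i, Measurable (y i))
    (hyi : iIndepFun y P) (hyl : ∀ i, P.map (y i) = volume.restrict (Set.Ico 0 1))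
    (c : ι → ℤ) :
    ∫ ω, ∏ i, exp (2 * π * I * c i * y i ω) ∂P = if c = 0 then 1 else 0 := by
  rw [hyi.integral_fun_prod_comp (X := y) (f := fun i t => exp (2 * π * I * c i * t))
    (fun i => (hym i).aemeasurable) (fun i => by fun_prop)]
  have hone : ∀ i, ∫ ω, exp (2 * π * I * c i * y i ω) ∂P = if c i = 0 then 1 else 0 := by
    intro i
    rw [← integral_map (f := fun t : ℝ => exp (2 * π * I * c i * t)) (hym i).aemeasurable
      (by fun_prop), hyl, integral_exp_two_pi_I_int_mul_Ico]
  simp_rw [hone, prod_ite_zero, prod_const_one, funext_iff]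
  simp

lemma integral_exp_four_phases_of_iIndepFun_uniform (hym : ∀ i, Measurable (y i))
    (hyi : iIndepFun y P) (hyl : ∀ i, P.map (y i) = volume.restrict (Set.Ico 0 1))
    {a b : ι} (hab : a ≠ b) (c d : ι) :
    ∫ ω, exp (2 * π * I * (y a ω - y b ω + y c ω - y d ω : ℝ)) ∂P =
      if a = d ∧ b = c then 1 else 0 := by
  classical
  set e : ι → ℤ := Pi.single a 1 - Pi.single b 1 + Pi.single c 1 - Pi.single d 1
  have hsum : ∀ ω, ∏ i, exp (2 * π * I * e i * y i ω) =
      exp (2 * π * I * (y a ω - y b ω + y c ω - y d ω : ℝ)) := by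
    intro ω
    rw [← exp_sum]
    simp_rw [mul_assoc (2 * π * I : ℂ), ← mul_sum]
    congr 2
    simp [e, Pi.single_apply, sub_mul, add_mul, ite_mul, sum_add_distrib, sum_sub_distrib]
  have he : e = 0 ↔ a = d ∧ b = c := by
    constructor
    · intro h
      have ha := congrFun h a
      have hb := congrFun h b
      simp only [e, Pi.sub_apply, Pi.add_apply, Pi.single_apply, Pi.zero_apply] at ha hb
      split_ifs at ha hb <;> simp_all
    · rintro ⟨rfl, rfl⟩
      simp [e]
  simp_rw [← hsum, integral_prod_exp_of_iIndepFun_uniform hym hyi hyl e, he]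

end UniformPhases

lemma mul_conj_mul_mul_conj_eq_exp {ι : Type*} {s : ℝ} {θ : ι → ℝ} {z : ι → ℂ}
    (hz : ∀ i, z i = s * exp (2 * π * I * θ i)) (a b c d : ι) :
    z a * conj (z b) * (z c * conj (z d)) =
      (s ^ 4 : ℝ) * exp (2 * π * I * (θ a - θ b + θ c - θ d : ℝ)) := by
  simp only [hz, map_mul, conj_ofReal, ← exp_conj, conj_I, conj_ofNat]
  push_cast
  rw [show (2 * π * I * (θ a - θ b + θ c - θ d) : ℂ) = 2 * π * I * θ a + 2 * ↑π * -I * θ b +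
      (2 * π * I * θ c + 2 * ↑π * -I * θ d) by ring, exp_add, exp_add, exp_add]
  ring

lemma Matrix.trace_sq_sub_smul_one_of_diag_eq {n R : Type*} [Fintype n] [DecidableEq n]
    [CommRing R] (S : Matrix n n R) {c : R} (hS : ∀ i, S i i = c) :
    ((S - c • 1) ^ 2).trace = ∑ i, ∑ j ∈ univ.erase i, S i j * S j i := by
  simp only [Matrix.trace, Matrix.diag, sq, Matrix.mul_apply]
  refine sum_congr rfl fun i _ => ?_
  rw [← add_sum_erase _ _ (mem_univ i)]
  simp only [Matrix.sub_apply, hS, Matrix.smul_apply, Matrix.one_apply_eq, smul_eq_mul, mul_one,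
    sub_self, zero_mul, zero_add]
  refine sum_congr rfl fun j hj => ?_
  have hij := (ne_of_mem_erase hj).symm
  simp [Matrix.one_apply_ne hij, Matrix.one_apply_ne hij.symm]

lemma AddChar.sum_erase_mul_sub {R R' : Type*} [CommRing R] [Fintype R] [DecidableEq R]
    [CommRing R'] [IsDomain R'] {ψ : AddChar R R'} (hψ : ψ.IsPrimitive) (n x : R) :
    ∑ y ∈ univ.erase x, ψ (n * (x - y)) = (if n = 0 then (Fintype.card R : R') else 0) - 1 := by
  rw [sum_erase_eq_sub (mem_univ x), sub_self, mul_zero, AddChar.map_zero_eq_one,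
    Fintype.sum_equiv (Equiv.subLeft x) _ (fun y => ψ (y * n)) fun y => by simp [mul_comm],
    AddChar.sum_mulShift n hψ]
  split_ifs <;> simp

section Sections

variable {α β : Type*} [Fintype β] [DecidableEq α] [DecidableEq β]

lemma card_filter_fst_eq (Λ : Finset (α × β)) (k : α) :
    #{p ∈ Λ | p.1 = k} = #{l | (k, l) ∈ Λ} := by
  refine card_nbij' Prod.snd (Prod.mk k) ?_ ?_ ?_ ?_
  · rintro ⟨k', l⟩ hp
    obtain ⟨hp, rfl⟩ := mem_filter.1 hp
    simpa using hp
  · intro l hl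
    simpa using hl
  · rintro ⟨k', l⟩ hp
    obtain ⟨-, rfl⟩ := mem_filter.1 hp
    rfl
  · intro l _
    rfl

lemma card_eq_sum_card_sections [Fintype α] (Λ : Finset (α × β)) :
    #Λ = ∑ k, #{l | (k, l) ∈ Λ} := by
  simp_rw [← card_filter_fst_eq]
  exact card_eq_sum_card_fiberwise fun p _ => mem_univ p.1

lemma sum_sum_ite_fst_eq [Fintype α] {R : Type*} [CommRing R] (Λ : Finset (α × β)) (c : R) :
    ∑ p ∈ Λ, ∑ q ∈ Λ, (if p.1 = q.1 then (if p = q then c else 0) - 1 else 0) =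
      ∑ k, (#{l | (k, l) ∈ Λ} : R) * (c - #{l | (k, l) ∈ Λ}) := by
  have hinner : ∀ p ∈ Λ, ∑ q ∈ Λ, (if p.1 = q.1 then (if p = q then c else 0) - 1 else 0) =
      c - #{q ∈ Λ | q.1 = p.1} := fun p hp => by
    rw [← sum_filter, sum_sub_distrib, sum_ite_eq, if_pos (by simpa using hp), sum_const,
      nsmul_one]
    simp_rw [eq_comm (a := p.1)]
  rw [sum_congr rfl hinner, ← sum_fiberwise Λ Prod.fst]
  refine sum_congr rfl fun k _ => ?_
  rw [sum_congr rfl fun p hp => by rw [(mem_filter.1 hp).2], sum_const, nsmul_eq_mul,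
    card_filter_fst_eq]

end Sections

lemma sum_mul_card_sub_le {ι : Type*} [Fintype ι] (a : ι → ℝ) :
    1 / Fintype.card ι * ∑ i, a i * (Fintype.card ι - a i) ≤
      (∑ i, a i) * (1 - (∑ i, a i) / (Fintype.card ι : ℝ) ^ 2) := by
  cases isEmpty_or_nonempty ι
  · simp
  set N : ℝ := (Fintype.card ι : ℝ)
  have hN : 0 < N := by positivity
  have hCS : (∑ i, a i) ^ 2 ≤ N * ∑ i, a i ^ 2 := by
    simpa using sq_sum_le_card_mul_sum_sq (s := univ) (f := a)
  have hexp : ∑ i, a i * (N - a i) = N * ∑ i, a i - ∑ i, a i ^ 2 := by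
    rw [mul_sum, ← sum_sub_distrib]
    exact sum_congr rfl fun i _ => by ring
  have hsq : (∑ i, a i) ^ 2 / N ^ 2 ≤ (∑ i, a i ^ 2) / N := by
    rw [div_le_div_iff₀ (by positivity) hN]
    nlinarith
  rw [hexp, show 1 / N * (N * ∑ i, a i - ∑ i, a i ^ 2) = ∑ i, a i - (∑ i, a i ^ 2) / N by
    field_simp]
  linarith [show (∑ i, a i) * (1 - (∑ i, a i) / N ^ 2) = ∑ i, a i - (∑ i, a i) ^ 2 / N ^ 2 by
    ring]

lemma tfShift_apply_eq_stdAddChar (M : ℕ) [NeZero M] (k l : ZMod M) (g : ZMod M → ℂ)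
    (m : ZMod M) : tfShift M k l g m = ZMod.stdAddChar (l * m) * g (m - k) := by
  have hlm : l * m = ((l.val * m.val : ℕ) : ZMod M) := by simp
  rw [tfShift, hlm, ZMod.stdAddChar_apply, ZMod.toCircle_natCast]
  push_cast
  ring_nf

lemma frameOp_apply_eq (M : ℕ) [NeZero M] (Λ : Finset (ZMod M × ZMod M)) (g : ZMod M → ℂ)
    (m₁ m₂ : ZMod M) :
    frameOp M Λ g m₁ m₂ =
      ∑ p ∈ Λ, ZMod.stdAddChar (p.2 * (m₁ - m₂)) * (g (m₁ - p.1) * conj (g (m₂ - p.1))) := by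
  refine sum_congr rfl fun p _ => ?_
  rw [tfShift_apply_eq_stdAddChar, tfShift_apply_eq_stdAddChar, (starRingEnd ℂ).map_mul,
    ← AddChar.map_neg_eq_conj, mul_sub, AddChar.map_sub_eq_div, AddChar.map_neg_eq_inv,
    div_eq_mul_inv]
  ring

lemma frameOp_apply_self (M : ℕ) [NeZero M] (Λ : Finset (ZMod M × ZMod M)) {g : ZMod M → ℂ}
    {c : ℂ} (hg : ∀ m, g m * conj (g m) = c) (m : ZMod M) :
    frameOp M Λ g m m = Λ.card * c := by
  simp [frameOp_apply_eq, hg]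

lemma frameOp_mul_frameOp_eq (M : ℕ) [NeZero M] (Λ : Finset (ZMod M × ZMod M))
    (g : ZMod M → ℂ) (m₁ m₂ : ZMod M) :
    frameOp M Λ g m₁ m₂ * frameOp M Λ g m₂ m₁ = ∑ p ∈ Λ, ∑ q ∈ Λ,
      ZMod.stdAddChar ((p.2 - q.2) * (m₁ - m₂)) *
        (g (m₁ - p.1) * conj (g (m₂ - p.1)) * (g (m₂ - q.1) * conj (g (m₁ - q.1)))) := by
  rw [frameOp_apply_eq, frameOp_apply_eq, sum_mul_sum]
  refine sum_congr rfl fun p _ => sum_congr rfl fun q _ => ?_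
  rw [show (p.2 - q.2) * (m₁ - m₂) = p.2 * (m₁ - m₂) + q.2 * (m₂ - m₁) by ring,
    AddChar.map_add_eq_mul]
  ring

namespace IsSteinhaus

variable {M : ℕ} {Ω : Type*} [MeasurableSpace Ω] {P : Measure Ω}
  {g : Ω → ZMod M → ℂ}

lemma mul_conj_self (hg : IsSteinhaus M P g) (ω : Ω) (m : ZMod M) :
    g ω m * conj (g ω m) = 1 / M := by
  obtain ⟨y, -, -, -, hgy⟩ := hg
  rw [mul_conj, normSq_eq_norm_sq, hgy, norm_mul, norm_exp]
  simp [Real.sq_sqrt]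

lemma integrable_four_mul (hg : IsSteinhaus M P g) (a b c d : ZMod M) :
    Integrable (fun ω => g ω a * conj (g ω b) * (g ω c * conj (g ω d))) P := by
  obtain ⟨y, hym, hyi, -, hgy⟩ := hg
  have := hyi.isProbabilityMeasure
  simp_rw [mul_conj_mul_mul_conj_eq_exp (hgy _) a b c d]
  exact (integrable_exp_two_pi_I_mul (P := P)
    (((hym a).sub (hym b)).add (hym c) |>.sub (hym d))).const_mul _

lemma integral_four_mul [NeZero M] (hg : IsSteinhaus M P g) {a b : ZMod M} (hab : a ≠ b)
    (c d : ZMod M) :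
    ∫ ω, g ω a * conj (g ω b) * (g ω c * conj (g ω d)) ∂P =
      if a = d ∧ b = c then 1 / (M : ℂ) ^ 2 else 0 := by
  obtain ⟨y, hym, hyi, hyl, hgy⟩ := hg
  simp_rw [mul_conj_mul_mul_conj_eq_exp (hgy _) a b c d]
  rw [integral_const_mul, integral_exp_four_phases_of_iIndepFun_uniform hym hyi hyl hab]
  have hM : (1 / √M) ^ 4 = (1 / M ^ 2 : ℝ) := by
    rw [div_pow, show √M ^ 4 = (√M ^ 2) ^ 2 by ring, Real.sq_sqrt (Nat.cast_nonneg M)]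
    simp
  split_ifs
  · rw [hM]
    push_cast
    ring
  · simp

lemma integrable_frameOp_mul_frameOp [NeZero M] (hg : IsSteinhaus M P g)
    (Λ : Finset (ZMod M × ZMod M)) (m₁ m₂ : ZMod M) :
    Integrable (fun ω => frameOp M Λ (g ω) m₁ m₂ * frameOp M Λ (g ω) m₂ m₁) P := by
  simp_rw [frameOp_mul_frameOp_eq]
  exact integrable_finsetSum _ fun p _ => integrable_finsetSum _ fun q _ =>
    (hg.integrable_four_mul _ _ _ _).const_mul _

lemma integral_frameOp_mul_frameOp [NeZero M] (hg : IsSteinhaus M P g)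
    (Λ : Finset (ZMod M × ZMod M)) {m₁ m₂ : ZMod M} (hm : m₁ ≠ m₂) :
    ∫ ω, frameOp M Λ (g ω) m₁ m₂ * frameOp M Λ (g ω) m₂ m₁ ∂P =
      ∑ p ∈ Λ, ∑ q ∈ Λ,
        if p.1 = q.1 then ZMod.stdAddChar ((p.2 - q.2) * (m₁ - m₂)) / (M : ℂ) ^ 2 else 0 := by
  simp_rw [frameOp_mul_frameOp_eq]
  rw [integral_finsetSum _ fun p _ => integrable_finsetSum _ fun q _ =>
    (hg.integrable_four_mul _ _ _ _).const_mul _]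
  refine sum_congr rfl fun p _ => ?_
  rw [integral_finsetSum _ fun q _ => (hg.integrable_four_mul _ _ _ _).const_mul _]
  refine sum_congr rfl fun q _ => ?_
  rw [integral_const_mul, hg.integral_four_mul (by simpa using hm)]
  simp only [sub_right_inj, and_self]
  split_ifs <;> ring

lemma integral_trace_sq [NeZero M] (hg : IsSteinhaus M P g)
    (Λ : Finset (ZMod M × ZMod M)) :
    ∫ ω, ((frameOp M Λ (g ω) - ((Λ.card : ℂ) / M) • 1) ^ 2).trace ∂P =
      1 / M * ∑ p ∈ Λ, ∑ q ∈ Λ, if p.1 = q.1 then (if p = q then (M : ℂ) else 0) - 1 else 0 := by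
  have hdiag : ∀ ω m, frameOp M Λ (g ω) m m = Λ.card / M := fun ω m => by
    rw [frameOp_apply_self M Λ (hg.mul_conj_self ω), mul_one_div]
  simp_rw [Matrix.trace_sq_sub_smul_one_of_diag_eq _ (hdiag _)]
  rw [integral_finsetSum _ fun m₁ _ => integrable_finsetSum _ fun m₂ _ =>
    hg.integrable_frameOp_mul_frameOp Λ m₁ m₂]
  rw [sum_congr rfl fun m₁ _ => (integral_finsetSum _ fun m₂ _ =>
    hg.integrable_frameOp_mul_frameOp Λ m₁ m₂).trans
    (sum_congr rfl fun m₂ hm₂ => hg.integral_frameOp_mul_frameOp Λ (ne_of_mem_erase hm₂).symm)]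
  simp only [Finset.sum_comm (s := univ.erase _) (t := Λ),
    Finset.sum_comm (s := (univ : Finset (ZMod M))) (t := Λ), mul_sum]
  refine sum_congr rfl fun p _ => sum_congr rfl fun q _ => ?_
  have hchar : ∑ m₁, ∑ m₂ ∈ univ.erase m₁,
      ZMod.stdAddChar ((p.2 - q.2) * (m₁ - m₂)) / (M : ℂ) ^ 2 =
        1 / M * ((if p.2 = q.2 then (M : ℂ) else 0) - 1) := by
    simp_rw [← sum_div, AddChar.sum_erase_mul_sub (ZMod.isPrimitive_stdAddChar M), sub_eq_zero,
      ZMod.card, sum_const, card_univ, ZMod.card, nsmul_eq_mul]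
    field_simp
  simp only [sum_ite_irrel, sum_const_zero]
  split_ifs with h₁ h₂
  · rw [hchar, if_pos (congrArg Prod.snd h₂)]
  · rw [hchar, if_neg fun h => h₂ (Prod.ext h₁ h)]
  · rw [mul_zero]

end IsSteinhaus

theorem stmt1_general (M : ℕ) [NeZero M] {Ω : Type*} [MeasurableSpace Ω] (P : Measure Ω)
    (g : Ω → ZMod M → ℂ) (hg : IsSteinhaus M P g)
    (Λ : Finset (ZMod M × ZMod M))
    (H : Ω → Matrix (ZMod M) (ZMod M) ℂ)
    (hH : ∀ ω, H ω = frameOp M Λ (g ω) - ((Λ.card : ℂ) / (M : ℂ)) • 1)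
    (A : ZMod M → Finset (ZMod M))
    (hA : ∀ k, A k = Finset.univ.filter fun l => (k, l) ∈ Λ) :
    (∫ ω, Matrix.trace ((H ω) ^ 2) ∂P) =
        ((1 / (M : ℝ) * ∑ k : ZMod M, ((A k).card : ℝ) * ((M : ℝ) - (A k).card) : ℝ) : ℂ) ∧
      1 / (M : ℝ) * ∑ k : ZMod M, ((A k).card : ℝ) * ((M : ℝ) - (A k).card) ≤
        (Λ.card : ℝ) * (1 - (Λ.card : ℝ) / (M : ℝ) ^ 2) := by
  constructor
  · simp_rw [hH, hg.integral_trace_sq Λ, sum_sum_ite_fst_eq, ← hA]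
    push_cast
    rfl
  · rw [card_eq_sum_card_sections Λ]
    simpa [← hA] using sum_mul_card_sub_le fun k => ((A k).card : ℝ)

/-- E[Tr(H²)] = (1/M)·Σ_k |A_k|(M − |A_k|) ≤ |Λ|(1 − |Λ|/M²),
where H = Φ_Λ Φ_Λ* − (|Λ|/M)·I and A_k = {ℓ : (k,ℓ) ∈ Λ}. -/
theorem stmt1 (M : ℕ) [NeZero M] {Ω : Type*} [MeasurableSpace Ω] (P : Measure Ω)
    [IsProbabilityMeasure P] (g : Ω → ZMod M → ℂ) (hg : IsSteinhaus M P g)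
    (Λ : Finset (ZMod M × ZMod M))
    (H : Ω → Matrix (ZMod M) (ZMod M) ℂ)
    (hH : ∀ ω, H ω = frameOp M Λ (g ω) - ((Λ.card : ℂ) / (M : ℂ)) • 1)
    (A : ZMod M → Finset (ZMod M))
    (hA : ∀ k, A k = Finset.univ.filter fun l => (k, l) ∈ Λ) :
    (∫ ω, Matrix.trace ((H ω) ^ 2) ∂P) =
        ((1 / (M : ℝ) * ∑ k : ZMod M, ((A k).card : ℝ) * ((M : ℝ) - (A k).card) : ℝ) : ℂ) ∧
      1 / (M : ℝ) * ∑ k : ZMod M, ((A k).card : ℝ) * ((M : ℝ) - (A k).card) ≤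
        (Λ.card : ℝ) * (1 - (Λ.card : ℝ) / (M : ℝ) ^ 2) :=
  stmt1_general M P g hg Λ H hH A hA
end
end

section
/- Let g be a Steinhaus window, Λ ⊆ ℤ_M × ℤ_M, H = Φ_Λ Φ_Λ* − (|Λ|/M)·I_M, and for k ∈ ℤ_M set A_k = {ℓ ∈ ℤ_M : (k,ℓ) ∈ Λ}. Fix an integer m ≥ 1 and L > 0, and suppose that for every k ∈ ℤ_M and every q ∈ ℤ_M with q ≠ 0 one has |Σ_{ℓ∈A_k} e^{2πiℓq/M}| ≤ L. Then |E[Tr(H^m)]| ≤ L^m · m! · M. (In the paper this is applied with L = C'·log M, giving E[Tr(H^m)] ≤ C'^m · m! · M · (log M)^m.) -/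
/-!
Write the Steinhaus window as `g = M^{-1/2} u` with `u x = e^{2πi y_x}`. Splitting `Λ` into its
fibres `A_k` gives `H (x₁, x₂) = M⁻¹ ∑ₖ c_k (x₁ - x₂) u (x₁ - k) conj (u (x₂ - k))`, where
`c_k p = ∑_{l ∈ A_k} e^{2πi l p / M}` for `p ≠ 0` and `c_k 0 = 0`: the zero frequency is exactly
what `(|Λ|/M) I` removes. Expanding `Tr (H^m)` over closed walks `f` and shifts `κ`, the
expectation of `∏ₜ u (aₜ) conj (u (bₜ))` for independent Steinhaus phases is `1` if `b` is a
rearrangement of `a` and `0` otherwise. Every surviving term has modulus at most `M^{-m} L^m`, and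
at most `m! M^{m+1}` pairs `(f, κ)` survive: the rearrangement `σ`, the differences `f - κ` and
`κ 0` determine `κ` step by step around the cycle.
-/

open MeasureTheory ProbabilityTheory Complex Finset
open scoped Real BigOperators Classical

noncomputable section

open ComplexConjugate

namespace Matrix

variable {n R : Type*} [Fintype n] [DecidableEq n] [CommSemiring R]

theorem pow_succ_apply_eq_sum_prod (A : Matrix n n R) (q : ℕ) (i j : n) :
    (A ^ (q + 1)) i j = ∑ c : Fin q → n,
      ∏ t, A ((Fin.cons i c : Fin (q + 1) → n) t) ((Fin.snoc c j : Fin (q + 1) → n) t) := by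
  induction q generalizing i with
  | zero => simp [Fin.snoc]
  | succ q ih =>
    rw [pow_succ', mul_apply, ← (Fin.consEquiv fun _ => n).sum_comp, Fintype.sum_prod_type]
    refine Finset.sum_congr rfl fun x _ => ?_
    rw [ih, Finset.mul_sum]
    refine Finset.sum_congr rfl fun c _ => ?_
    simp [Fin.prod_univ_succ, Fin.consEquiv, ← Fin.cons_snoc_eq_snoc_cons]

theorem trace_pow_eq_sum_prod {m : ℕ} [NeZero m] (A : Matrix n n R) :
    (A ^ m).trace = ∑ f : Fin m → n, ∏ t, A (f t) (f (t + 1)) := by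
  obtain ⟨q, rfl⟩ := Nat.exists_eq_succ_of_ne_zero (NeZero.ne m)
  rw [← (Fin.consEquiv fun _ => n).sum_comp, Fintype.sum_prod_type, trace]
  refine Finset.sum_congr rfl fun i _ => ?_
  rw [diag_apply, pow_succ_apply_eq_sum_prod]
  refine Finset.sum_congr rfl fun c _ => Finset.prod_congr rfl fun t _ => ?_
  congr 1
  rcases Fin.eq_castSucc_or_eq_last t with ⟨s, rfl⟩ | rfl
  · simp [Fin.consEquiv, Fin.coeSucc_eq_succ]
  · simp [Fin.consEquiv]

end Matrix

theorem exists_perm_apply_eq_of_card_fiber_eq {ι α : Type*} [Fintype ι] [DecidableEq α]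
    {a b : ι → α} (h : ∀ x, #{j | a j = x} = #{j | b j = x}) :
    ∃ σ : Equiv.Perm ι, ∀ j, b (σ j) = a j :=
  ⟨Equiv.ofFiberEquiv fun x => Fintype.equivOfCardEq (by
      simpa only [Fintype.card_subtype] using h x),
    Equiv.ofFiberEquiv_map _⟩

theorem Fin.apply_eq_apply_zero_of_forall_add_one {m : ℕ} [NeZero m] {α : Type*}
    {δ : Fin m → α} (h : ∀ i, δ (i + 1) = δ i) (j : Fin m) : δ j = δ 0 := by
  obtain ⟨q, rfl⟩ := Nat.exists_eq_succ_of_ne_zero (NeZero.ne m)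
  induction j using Fin.induction with
  | zero => rfl
  | succ i hi => rw [← Fin.coeSucc_eq_succ, h, hi]

section Counting

variable {G : Type*} [AddCommGroup G] [Fintype G] [DecidableEq G] {m : ℕ} [NeZero m]

theorem card_sub_eq_sub_perm_le (σ : Equiv.Perm (Fin m)) :
    #{p : (Fin m → G) × (Fin m → G) | ∀ j, p.1 j - p.2 j = p.1 (σ j + 1) - p.2 (σ j)}
      ≤ Fintype.card G ^ m * Fintype.card G := by
  have step : ∀ p : (Fin m → G) × (Fin m → G),
      (∀ j, p.1 j - p.2 j = p.1 (σ j + 1) - p.2 (σ j)) → ∀ i,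
        p.2 (i + 1) = p.2 i + ((p.1 - p.2) (σ.symm i) - (p.1 - p.2) (i + 1)) := by
    intro p hp i
    rw [Pi.sub_apply, hp (σ.symm i), Equiv.apply_symm_apply, Pi.sub_apply]
    abel
  calc _ ≤ #(univ : Finset ((Fin m → G) × G)) := by
        refine Finset.card_le_card_of_injOn (fun p => (p.1 - p.2, p.2 0))
          (fun _ _ => Finset.mem_coe.2 (Finset.mem_univ _)) ?_
        rintro p hp p' hp' heq
        simp only [Finset.coe_filter, Finset.mem_univ, true_and, Set.mem_ofPred_eq] at hp hp'
        obtain ⟨hd, h0⟩ := Prod.mk.inj heq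
        have hκ : p.2 = p'.2 := by
          suffices h : ∀ j, p.2 j - p'.2 j = p.2 0 - p'.2 0 by
            funext j; simpa [h0, sub_eq_zero] using h j
          refine Fin.apply_eq_apply_zero_of_forall_add_one fun i => ?_
          rw [step p hp i, step p' hp' i, hd]
          abel
        exact Prod.ext (by simpa [hκ] using hd) hκ
    _ = Fintype.card G ^ m * Fintype.card G := by simp

theorem card_sub_rearrangement_le :
    #{p : (Fin m → G) × (Fin m → G) |
        ∀ x, #{j | p.1 j - p.2 j = x} = #{j | p.1 (j + 1) - p.2 j = x}}
      ≤ m.factorial * (Fintype.card G ^ m * Fintype.card G) := by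
  calc _ ≤ #(univ.biUnion fun σ : Equiv.Perm (Fin m) =>
        {p : (Fin m → G) × (Fin m → G) | ∀ j, p.1 j - p.2 j = p.1 (σ j + 1) - p.2 (σ j)}) := by
        refine Finset.card_le_card fun p hp => ?_
        obtain ⟨σ, hσ⟩ := exists_perm_apply_eq_of_card_fiber_eq (Finset.mem_filter.1 hp).2
        exact Finset.mem_biUnion.2 ⟨σ, Finset.mem_univ _, Finset.mem_filter.2
          ⟨Finset.mem_univ _, fun j => (hσ j).symm⟩⟩
    _ ≤ ∑ σ : Equiv.Perm (Fin m), Fintype.card G ^ m * Fintype.card G :=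
        Finset.card_biUnion_le.trans (Finset.sum_le_sum fun σ _ => card_sub_eq_sub_perm_le σ)
    _ = m.factorial * (Fintype.card G ^ m * Fintype.card G) := by simp [Fintype.card_perm]

end Counting

section Steinhaus

variable {Ω : Type*} [MeasurableSpace Ω] {P : Measure Ω}

theorem integral_exp_two_pi_I_int_mul_of_map_eq_uniform {Y : Ω → ℝ} (hY : Measurable Y)
    (hmap : P.map Y = volume.restrict (Set.Ico 0 1)) (n : ℤ) :
    ∫ ω, cexp (2 * π * I * n * Y ω) ∂P = if n = 0 then 1 else 0 := by
  rw [← integral_map (f := fun t : ℝ => cexp (2 * π * I * n * t)) hY.aemeasurable (by fun_prop),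
    hmap, integral_Ico_eq_integral_Ioo, ← integral_Ioc_eq_integral_Ioo,
    ← intervalIntegral.integral_of_le zero_le_one]
  split_ifs with hn
  · simp [hn]
  · have hc : 2 * π * I * n ≠ 0 := by simp [hn, Real.pi_ne_zero, I_ne_zero]
    rw [integral_exp_mul_complex hc, mul_comm _ (n : ℂ)]
    simp [Complex.exp_int_mul_two_pi_mul_I]

theorem sum_comp_eq_sum_card_nsmul {ι J M : Type*} [Fintype ι] [DecidableEq ι] [Fintype J]
    [AddCommMonoid M] (a : J → ι) (f : ι → M) :
    ∑ j, f (a j) = ∑ x, #{j | a j = x} • f x := by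
  rw [← Finset.sum_fiberwise' univ a f]
  simp

theorem integral_prod_exp_mul_conj_exp {ι J : Type*} [Fintype ι] [DecidableEq ι] [Fintype J]
    {y : ι → Ω → ℝ} (hmeas : ∀ x, Measurable (y x)) (hindep : iIndepFun y P)
    (hmap : ∀ x, P.map (y x) = volume.restrict (Set.Ico 0 1)) (a b : J → ι) :
    ∫ ω, ∏ j, cexp (2 * π * I * y (a j) ω) * conj (cexp (2 * π * I * y (b j) ω)) ∂P
      = if ∀ x, #{j | a j = x} = #{j | b j = x} then 1 else 0 := by
  set n : ι → ℤ := fun x => #{j | a j = x} - #{j | b j = x}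
  have hprod : ∀ ω, ∏ j, cexp (2 * π * I * y (a j) ω) * conj (cexp (2 * π * I * y (b j) ω))
      = ∏ x, cexp (2 * π * I * n x * y x ω) := by
    intro ω
    have hreal : ∑ j, (y (a j) ω - y (b j) ω) = ∑ x, (n x : ℝ) * y x ω := by
      simp only [Finset.sum_sub_distrib, sum_comp_eq_sum_card_nsmul a (fun x => y x ω),
        sum_comp_eq_sum_card_nsmul b (fun x => y x ω), n, nsmul_eq_mul]
      push_cast
      simp [sub_mul]
    calc _ = ∏ j, cexp (2 * π * I * ((y (a j) ω - y (b j) ω : ℝ))) := by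
          refine Finset.prod_congr rfl fun j _ => ?_
          rw [← Complex.exp_conj, ← Complex.exp_add]
          simp only [map_mul, Complex.conj_ofReal, Complex.conj_I, map_ofNat]
          push_cast
          ring_nf
      _ = cexp (2 * π * I * ((∑ j, (y (a j) ω - y (b j) ω) : ℝ))) := by
          rw [← Complex.exp_sum, Complex.ofReal_sum, Finset.mul_sum]
      _ = _ := by
          rw [hreal, ← Complex.exp_sum, Complex.ofReal_sum, Finset.mul_sum]
          push_cast
          simp only [mul_assoc]
  calc _ = ∫ ω, ∏ x, cexp (2 * π * I * n x * y x ω) ∂P := by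
        congr 1 with ω; exact hprod ω
    _ = ∏ x, ∫ ω, cexp (2 * π * I * n x * y x ω) ∂P :=
        hindep.integral_fun_prod_comp (f := fun x (t : ℝ) => cexp (2 * π * I * n x * t))
          (fun x => (hmeas x).aemeasurable) (fun x => by fun_prop)
    _ = ∏ x, if n x = 0 then 1 else 0 := by
        simp only [integral_exp_two_pi_I_int_mul_of_map_eq_uniform (hmeas _) (hmap _)]
    _ = _ := by simp [Fintype.prod_boole, n, sub_eq_zero]

end Steinhaus

section PhaseMatrix

variable {G : Type*} [AddCommGroup G] [Fintype G] [DecidableEq G]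

def phaseMatrix (c : G → G → ℂ) (u : G → ℂ) : Matrix G G ℂ :=
  Matrix.of fun x₁ x₂ =>
    (Fintype.card G : ℂ)⁻¹ * ∑ k, c k (x₁ - x₂) * (u (x₁ - k) * conj (u (x₂ - k)))

theorem trace_phaseMatrix_pow {m : ℕ} [NeZero m] (c : G → G → ℂ) (u : G → ℂ) :
    (phaseMatrix c u ^ m).trace = ∑ f : Fin m → G, ∑ κ : Fin m → G,
      (Fintype.card G : ℂ)⁻¹ ^ m * (∏ t, c (κ t) (f t - f (t + 1))) *
        ∏ t, u (f t - κ t) * conj (u (f (t + 1) - κ t)) := by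
  rw [Matrix.trace_pow_eq_sum_prod]
  refine Finset.sum_congr rfl fun f _ => ?_
  simp only [phaseMatrix, Matrix.of_apply, Finset.prod_mul_distrib, Finset.prod_const,
    Finset.card_univ, Fintype.card_fin, Finset.prod_univ_sum, Fintype.piFinset_univ,
    Finset.mul_sum, mul_assoc]

theorem norm_integral_trace_phaseMatrix_pow_le {Ω : Type*} [MeasurableSpace Ω] {P : Measure Ω}
    [IsFiniteMeasure P] {m : ℕ} [NeZero m] {u : Ω → G → ℂ}
    (hmeas : ∀ x, Measurable fun ω => u ω x) (hnorm : ∀ ω x, ‖u ω x‖ ≤ 1)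
    (hmoment : ∀ a b : Fin m → G, ∫ ω, ∏ t, u ω (a t) * conj (u ω (b t)) ∂P
      = if ∀ x, #{t | a t = x} = #{t | b t = x} then 1 else 0)
    {c : G → G → ℂ} {L : ℝ} (hc : ∀ k p, ‖c k p‖ ≤ L) :
    ‖∫ ω, (phaseMatrix c (u ω) ^ m).trace ∂P‖ ≤ L ^ m * m.factorial * Fintype.card G := by
  set N := Fintype.card G
  have hint : ∀ a b : Fin m → G, Integrable (fun ω => ∏ t, u ω (a t) * conj (u ω (b t))) P := by
    refine fun a b => (integrable_const (1 : ℝ)).mono' (by fun_prop) (ae_of_all _ fun ω => ?_)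
    rw [norm_prod]
    refine Finset.prod_le_one (fun _ _ => norm_nonneg _) fun t _ => ?_
    rw [norm_mul, RCLike.norm_conj]
    exact mul_le_one₀ (hnorm _ _) (norm_nonneg _) (hnorm _ _)
  set Rearr : (Fin m → G) → (Fin m → G) → Prop :=
    fun f κ => ∀ x, #{t | f t - κ t = x} = #{t | f (t + 1) - κ t = x}
  have hE : ∫ ω, (phaseMatrix c (u ω) ^ m).trace ∂P = ∑ f : Fin m → G, ∑ κ : Fin m → G,
      (N : ℂ)⁻¹ ^ m * (∏ t, c (κ t) (f t - f (t + 1))) * if Rearr f κ then 1 else 0 := by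
    simp only [trace_phaseMatrix_pow]
    rw [integral_finsetSum _ fun f _ => integrable_finsetSum _ fun κ _ => (hint _ _).const_mul _]
    refine Finset.sum_congr rfl fun f _ => ?_
    rw [integral_finsetSum _ fun κ _ => (hint _ _).const_mul _]
    refine Finset.sum_congr rfl fun κ _ => ?_
    rw [integral_const_mul, hmoment]
  have hterm : ∀ f κ, ‖(N : ℂ)⁻¹ ^ m * (∏ t, c (κ t) (f t - f (t + 1))) *
      if Rearr f κ then 1 else 0‖ ≤ (N : ℝ)⁻¹ ^ m * L ^ m * if Rearr f κ then 1 else 0 := by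
    intro f κ
    have hprod : ‖∏ t, c (κ t) (f t - f (t + 1))‖ ≤ L ^ m := by
      calc ‖∏ t, c (κ t) (f t - f (t + 1))‖ ≤ ∏ _t : Fin m, L := by
            rw [norm_prod]
            exact Finset.prod_le_prod (fun _ _ => norm_nonneg _) fun t _ => hc (κ t) _
        _ = L ^ m := by simp
    rw [norm_mul, norm_mul, norm_pow, norm_inv, Complex.norm_natCast]
    split_ifs <;> simp only [norm_one, mul_one, norm_zero, mul_zero, le_refl]
    gcongr
  calc _ ≤ ∑ f : Fin m → G, ∑ κ : Fin m → G,
        (N : ℝ)⁻¹ ^ m * L ^ m * if Rearr f κ then 1 else 0 := by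
        rw [hE]
        exact norm_sum_le_of_le _ fun f _ => norm_sum_le_of_le _ fun κ _ => hterm f κ
    _ = (N : ℝ)⁻¹ ^ m * L ^ m * #{p : (Fin m → G) × (Fin m → G) | Rearr p.1 p.2} := by
        rw [← Fintype.sum_prod_type', ← Finset.mul_sum, Finset.sum_boole]
    _ ≤ (N : ℝ)⁻¹ ^ m * L ^ m * (m.factorial * (N ^ m * N)) := by
        have hL : 0 ≤ L := (norm_nonneg _).trans (hc 0 0)
        gcongr
        exact_mod_cast card_sub_rearrangement_le
    _ = L ^ m * m.factorial * N := by
        have : (N : ℝ) ≠ 0 := by positivity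
        rw [inv_pow]
        field_simp

end PhaseMatrix

section FrameOperator

variable {M : ℕ} [NeZero M]

theorem exp_two_pi_I_val_mul_val (l x : ZMod M) :
    cexp (2 * π * I * l.val * x.val / M) = ZMod.stdAddChar (l * x) := by
  have hlx : l * x = ((l.val * x.val : ℕ) : ZMod M) := by simp
  rw [hlx, ZMod.stdAddChar_apply, ZMod.toCircle_natCast]
  push_cast
  ring_nf

theorem tfShift_apply (k l : ZMod M) (g : ZMod M → ℂ) (x : ZMod M) :
    tfShift M k l g x = ZMod.stdAddChar (l * x) * g (x - k) := by
  rw [tfShift, exp_two_pi_I_val_mul_val]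

def centeredFiberSum (Λ : Finset (ZMod M × ZMod M)) (k p : ZMod M) : ℂ :=
  if p = 0 then 0 else ∑ l with (k, l) ∈ Λ, ZMod.stdAddChar (l * p)

theorem norm_centeredFiberSum_le {Λ : Finset (ZMod M × ZMod M)} {L : ℝ} (hL : 0 ≤ L)
    (h : ∀ k q : ZMod M, q ≠ 0 →
      ‖∑ l with (k, l) ∈ Λ, cexp (2 * π * I * l.val * q.val / M)‖ ≤ L) (k p : ZMod M) :
    ‖centeredFiberSum Λ k p‖ ≤ L := by
  unfold centeredFiberSum
  split_ifs with hp
  · simpa using hL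
  · simpa only [exp_two_pi_I_val_mul_val] using h k p hp

theorem frameOp_sub_smul_one_eq_phaseMatrix (Λ : Finset (ZMod M × ZMod M)) {u : ZMod M → ℂ}
    (hu : ∀ x, ‖u x‖ = 1) :
    frameOp M Λ (fun x => ((1 / √M : ℝ) : ℂ) * u x) - ((#Λ : ℂ) / M) • 1
      = phaseMatrix (centeredFiberSum Λ) u := by
  have hM : ((1 / √M : ℝ) : ℂ) * ((1 / √M : ℝ) : ℂ) = (M : ℂ)⁻¹ := by
    rw [← Complex.ofReal_mul, div_mul_div_comm, one_mul, Real.mul_self_sqrt (Nat.cast_nonneg M)]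
    push_cast
    ring
  have hterm : ∀ (kl : ZMod M × ZMod M) (x₁ x₂ : ZMod M),
      tfShift M kl.1 kl.2 (fun x => ((1 / √M : ℝ) : ℂ) * u x) x₁
        * conj (tfShift M kl.1 kl.2 (fun x => ((1 / √M : ℝ) : ℂ) * u x) x₂)
      = (M : ℂ)⁻¹ *
          (ZMod.stdAddChar (kl.2 * (x₁ - x₂)) * (u (x₁ - kl.1) * conj (u (x₂ - kl.1)))) := by
    intro kl x₁ x₂
    have hχ : ZMod.stdAddChar (kl.2 * (x₁ - x₂))
        = ZMod.stdAddChar (kl.2 * x₁) * conj (ZMod.stdAddChar (kl.2 * x₂)) := by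
      rw [← AddChar.map_neg_eq_conj, ← AddChar.map_add_eq_mul, mul_sub, sub_eq_add_neg]
    rw [tfShift_apply, tfShift_apply, hχ, map_mul (starRingEnd ℂ), map_mul (starRingEnd ℂ),
      Complex.conj_ofReal, ← hM]
    ring
  have hfiber : ∀ F : ZMod M × ZMod M → ℂ,
      ∑ kl ∈ Λ, F kl = ∑ k, ∑ l with (k, l) ∈ Λ, F (k, l) :=
    fun F => Finset.sum_finset_product _ _ _ (by simp)
  ext x₁ x₂
  simp only [Matrix.sub_apply, Matrix.smul_apply, frameOp, phaseMatrix, Matrix.of_apply, hterm,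
    ZMod.card, hfiber, centeredFiberSum, smul_eq_mul]
  by_cases h : x₁ = x₂
  · subst h
    have hu' : ∀ x, u x * conj (u x) = 1 := fun x => by
      rw [Complex.mul_conj, Complex.normSq_eq_norm_sq, hu]; norm_num
    have hcard : (#Λ : ℂ) = ∑ k, (#{l | (k, l) ∈ Λ} : ℂ) := by simpa using hfiber 1
    simp [hu', hcard, Finset.sum_mul, div_eq_mul_inv]
  · simp [Matrix.one_apply_ne h, sub_ne_zero.2 h, Finset.mul_sum, Finset.sum_mul]

end FrameOperator

/-- If every nonzero-frequency exponential sum over each fiber A_k = {ℓ : (k,ℓ)∈Λ} is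
bounded by L, then |E[Tr(H^m)]| ≤ L^m · m! · M for H = Φ_Λ Φ_Λ* − (|Λ|/M)·I. -/
theorem stmt4 (M : ℕ) [NeZero M] {Ω : Type*} [MeasurableSpace Ω] (P : Measure Ω)
    [IsProbabilityMeasure P] (g : Ω → ZMod M → ℂ) (hg : IsSteinhaus M P g)
    (Λ : Finset (ZMod M × ZMod M))
    (H : Ω → Matrix (ZMod M) (ZMod M) ℂ)
    (hH : ∀ ω, H ω = frameOp M Λ (g ω) - ((Λ.card : ℂ) / (M : ℂ)) • 1)
    (A : ZMod M → Finset (ZMod M))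
    (hA : ∀ k, A k = Finset.univ.filter fun l => (k, l) ∈ Λ)
    (m : ℕ) (hm : 1 ≤ m) (L : ℝ) (hL : 0 < L)
    (hbound : ∀ k q : ZMod M, q ≠ 0 →
      ‖∑ l ∈ A k,
          Complex.exp (2 * (Real.pi : ℂ) * Complex.I * (l.val : ℂ) * (q.val : ℂ) / (M : ℂ))‖
        ≤ L) :
    ‖∫ ω, Matrix.trace ((H ω) ^ m) ∂P‖ ≤ L ^ m * (m.factorial : ℝ) * M := by
  obtain ⟨y, hmeas, hindep, hmap, hg⟩ := hg
  obtain rfl : A = fun k => univ.filter fun l => (k, l) ∈ Λ := funext hA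
  have : NeZero m := ⟨by omega⟩
  set u : Ω → ZMod M → ℂ := fun ω x => cexp (2 * π * I * y x ω)
  have hu : ∀ ω x, ‖u ω x‖ = 1 := fun ω x => by simp [u, Complex.norm_exp]
  have hH' : ∀ ω, H ω = phaseMatrix (centeredFiberSum Λ) (u ω) := fun ω => by
    rw [hH, ← frameOp_sub_smul_one_eq_phaseMatrix Λ (hu ω)]
    congr
    exact funext (hg ω)
  simp only [hH']
  simpa [ZMod.card] using norm_integral_trace_phaseMatrix_pow_le (fun x => by fun_prop)
    (fun ω x => (hu ω x).le) (integral_prod_exp_mul_conj_exp hmeas hindep hmap)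
    (norm_centeredFiberSum_le hL.le hbound)
end
end

section
/- Let h be a random vector in ℂ^M whose real and imaginary parts Re h(m), Im h(m), m ∈ ℤ_M, are 2M independent real Gaussian random variables with mean 0 and variance 1/(2M) (i.e., h ∼ 𝒞𝒩(0,(1/M)I_M)). Then P{ 1/2 < ‖h‖₂ < 2 } ≥ 1 − e^{−M/2} − e^{−9M/32}. In particular, there exists a constant C > 0 such that P{1/2 < ‖h‖₂ < 2} ≥ 1 − e^{−CM}. -/
open MeasureTheory ProbabilityTheory Complex Finset
open scoped Real BigOperators Classical

noncomputable section

/-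
The squared norm ‖h‖₂² is a sum of n = 2M independent squares of N(0, 1/n) variables, and
E[exp(t X²)] = (1 - 2vt)^(-1/2) for X ~ N(0, v) and 2vt < 1. Chernoff's bound with t = n/4 and
t = -3n/2 gives P{‖h‖₂² ≥ 4} ≤ (√2/e)^n ≤ e^(-9M/32) and P{‖h‖₂² ≤ 1/4} ≤ (e^(3/8)/2)^n ≤ e^(-M/2).
Writing p = e^(3/8)/2 and q = √2/e, the failure probability is at most
p^(2M) + q^(2M) ≤ (p² + q²)^M with p² + q² < 1, which yields C = -log(p² + q²).
-/

open scoped NNReal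

lemma gaussianPDFReal_zero_mul_exp_mul_sq (v : ℝ≥0) (t x : ℝ) :
    gaussianPDFReal 0 v x * Real.exp (t * x ^ 2) =
      (√(2 * π * v))⁻¹ * Real.exp (-((2 * (v : ℝ))⁻¹ - t) * x ^ 2) := by
  rw [gaussianPDFReal, mul_assoc, ← Real.exp_add]
  ring_nf

lemma mgf_sq_gaussianReal {v : ℝ≥0} {t : ℝ} (hv : v ≠ 0) (ht : 2 * v * t < 1) :
    mgf (fun x => x ^ 2) (gaussianReal 0 v) t = (√(1 - 2 * v * t))⁻¹ := by
  have hs : 0 < 1 - 2 * v * t := by linarith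
  have hb : π / ((2 * (v : ℝ))⁻¹ - t) = 2 * π * v / (1 - 2 * v * t) := by
    field_simp
  simp only [mgf, integral_gaussianReal_eq_integral_smul hv, smul_eq_mul,
    gaussianPDFReal_zero_mul_exp_mul_sq, integral_const_mul, integral_gaussian, hb,
    Real.sqrt_div' _ hs.le]
  field_simp

section SumOfSquares

variable {ι Ω : Type*} [Fintype ι] {mΩ : MeasurableSpace Ω} {P : Measure Ω}
  {u : ι → Ω → ℝ} {v : ℝ≥0} {t : ℝ}

lemma mgf_sq_of_map_eq_gaussianReal {X : Ω → ℝ} (hX : Measurable X)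
    (hlaw : P.map X = gaussianReal 0 v) (hv : v ≠ 0) (ht : 2 * v * t < 1) :
    mgf (fun ω => X ω ^ 2) P t = (√(1 - 2 * v * t))⁻¹ := by
  rw [← mgf_sq_gaussianReal hv ht, ← hlaw, mgf_map hX.aemeasurable (by fun_prop)]
  rfl

lemma mgf_sum_sq_of_iIndepFun (hmeas : ∀ i, Measurable (u i)) (hind : iIndepFun u P)
    (hlaw : ∀ i, P.map (u i) = gaussianReal 0 v) (hv : v ≠ 0) (ht : 2 * v * t < 1) :
    mgf (fun ω => ∑ i, u i ω ^ 2) P t = (√(1 - 2 * v * t))⁻¹ ^ Fintype.card ι := by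
  have hsum : (fun ω => ∑ i, u i ω ^ 2) = ∑ i, fun ω => u i ω ^ 2 := by
    ext ω; simp
  have hind_sq : iIndepFun (fun i ω => u i ω ^ 2) P :=
    hind.comp (fun _ x => x ^ 2) fun _ => by fun_prop
  rw [hsum, hind_sq.mgf_sum fun i => (hmeas i).pow_const 2]
  simp [mgf_sq_of_map_eq_gaussianReal (hmeas _) (hlaw _) hv ht]

lemma integrable_exp_mul_sum_sq (hmeas : ∀ i, Measurable (u i)) (hind : iIndepFun u P)
    (hlaw : ∀ i, P.map (u i) = gaussianReal 0 v) (hv : v ≠ 0) (ht : 2 * v * t < 1) :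
    Integrable (fun ω => Real.exp (t * ∑ i, u i ω ^ 2)) P := by
  have hpos : 0 < √(1 - 2 * v * t) := Real.sqrt_pos.mpr (by linarith)
  refine Integrable.of_integral_ne_zero ?_
  rw [← mgf, mgf_sum_sq_of_iIndepFun hmeas hind hlaw hv ht]
  positivity

lemma measureReal_sum_sq_ge_le_exp_mul (hmeas : ∀ i, Measurable (u i)) (hind : iIndepFun u P)
    (hlaw : ∀ i, P.map (u i) = gaussianReal 0 v) (hv : v ≠ 0) (ht₀ : 0 ≤ t)
    (ht : 2 * v * t < 1) (c : ℝ) :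
    P.real {ω | c ≤ ∑ i, u i ω ^ 2} ≤
      Real.exp (-t * c) * (√(1 - 2 * v * t))⁻¹ ^ Fintype.card ι := by
  have := hind.isProbabilityMeasure
  rw [← mgf_sum_sq_of_iIndepFun hmeas hind hlaw hv ht]
  exact measure_ge_le_exp_mul_mgf c ht₀ (integrable_exp_mul_sum_sq hmeas hind hlaw hv ht)

lemma measureReal_sum_sq_le_le_exp_mul (hmeas : ∀ i, Measurable (u i)) (hind : iIndepFun u P)
    (hlaw : ∀ i, P.map (u i) = gaussianReal 0 v) (hv : v ≠ 0) (ht : t ≤ 0) (c : ℝ) :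
    P.real {ω | ∑ i, u i ω ^ 2 ≤ c} ≤
      Real.exp (-t * c) * (√(1 - 2 * v * t))⁻¹ ^ Fintype.card ι := by
  have ht' : 2 * v * t < 1 := by nlinarith [v.coe_nonneg]
  have := hind.isProbabilityMeasure
  rw [← mgf_sum_sq_of_iIndepFun hmeas hind hlaw hv ht']
  exact measure_le_le_exp_mul_mgf c ht (integrable_exp_mul_sum_sq hmeas hind hlaw hv ht')

end SumOfSquares

lemma ofReal_one_sub_sub_le_measure {Ω : Type*} {mΩ : MeasurableSpace Ω} {P : Measure Ω}
    [IsProbabilityMeasure P] {s A B : Set Ω} (hs : sᶜ ⊆ A ∪ B) :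
    ENNReal.ofReal (1 - P.real A - P.real B) ≤ P s := by
  refine ENNReal.ofReal_le_of_le_toReal ?_
  have hcover : P.real Set.univ ≤ P.real s + P.real sᶜ := by
    rw [← Set.union_compl_self s]; exact measureReal_union_le _ _
  have hcompl : P.real sᶜ ≤ P.real A + P.real B :=
    (measureReal_mono hs).trans (measureReal_union_le _ _)
  rw [probReal_univ] at hcover
  rw [← measureReal_def]
  linarith

section NormalizedSumOfSquares

variable {ι Ω : Type*} [Fintype ι] [Nonempty ι] {mΩ : MeasurableSpace Ω} {P : Measure Ω}
  {u : ι → Ω → ℝ}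

lemma measureReal_sum_sq_ge_four_le (hmeas : ∀ i, Measurable (u i)) (hind : iIndepFun u P)
    (hlaw : ∀ i, P.map (u i) = gaussianReal 0 (Fintype.card ι : ℝ≥0)⁻¹) :
    P.real {ω | 4 ≤ ∑ i, u i ω ^ 2} ≤ (√2 / Real.exp 1) ^ Fintype.card ι := by
  have h2vt : 2 * ((Fintype.card ι : ℝ≥0)⁻¹ : ℝ≥0) * (Fintype.card ι / 4 : ℝ) = 1 / 2 := by
    push_cast; field_simp; ring
  refine (measureReal_sum_sq_ge_le_exp_mul (t := Fintype.card ι / 4) hmeas hind hlaw (by simp)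
    (by positivity) (by rw [h2vt]; norm_num) 4).trans_eq ?_
  rw [h2vt, div_pow, ← Real.exp_nat_mul, show (1 : ℝ) - 1 / 2 = 2⁻¹ by norm_num,
    Real.sqrt_inv, inv_inv, mul_comm, div_eq_mul_inv (√2 ^ _), ← Real.exp_neg]
  ring_nf

lemma measureReal_sum_sq_le_quarter_le (hmeas : ∀ i, Measurable (u i)) (hind : iIndepFun u P)
    (hlaw : ∀ i, P.map (u i) = gaussianReal 0 (Fintype.card ι : ℝ≥0)⁻¹) :
    P.real {ω | ∑ i, u i ω ^ 2 ≤ 1 / 4} ≤ (Real.exp (3 / 8) / 2) ^ Fintype.card ι := by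
  have h2vt : 2 * ((Fintype.card ι : ℝ≥0)⁻¹ : ℝ≥0) * (-(3 * Fintype.card ι / 2) : ℝ) = -3 := by
    push_cast; field_simp
  refine (measureReal_sum_sq_le_le_exp_mul (t := -(3 * Fintype.card ι / 2)) hmeas hind hlaw
    (by simp) (neg_nonpos.mpr (by positivity)) (1 / 4)).trans_eq ?_
  rw [h2vt, div_pow, ← Real.exp_nat_mul, show (1 : ℝ) - -3 = 2 ^ 2 by norm_num,
    Real.sqrt_sq zero_le_two, inv_pow, ← div_eq_mul_inv]
  ring_nf

lemma ofReal_le_measure_sqrt_sum_sq_mem_Ioo (hmeas : ∀ i, Measurable (u i))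
    (hind : iIndepFun u P) (hlaw : ∀ i, P.map (u i) = gaussianReal 0 (Fintype.card ι : ℝ≥0)⁻¹) :
    ENNReal.ofReal (1 - (Real.exp (3 / 8) / 2) ^ Fintype.card ι -
        (√2 / Real.exp 1) ^ Fintype.card ι) ≤
      P {ω | 1 / 2 < √(∑ i, u i ω ^ 2) ∧ √(∑ i, u i ω ^ 2) < 2} := by
  have := hind.isProbabilityMeasure
  refine (ENNReal.ofReal_le_ofReal ?_).trans
    (ofReal_one_sub_sub_le_measure (A := {ω | ∑ i, u i ω ^ 2 ≤ 1 / 4})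
      (B := {ω | 4 ≤ ∑ i, u i ω ^ 2}) ?_)
  · linarith [measureReal_sum_sq_le_quarter_le hmeas hind hlaw,
      measureReal_sum_sq_ge_four_le hmeas hind hlaw]
  · intro ω
    simp only [Set.mem_compl_iff, Set.mem_ofPred_eq, Set.mem_union,
      Real.lt_sqrt (by norm_num : (0 : ℝ) ≤ 1 / 2), Real.sqrt_lt' (by norm_num : (0 : ℝ) < 2)]
    intro hω
    by_contra! h
    exact hω ⟨by linarith [h.1], by linarith [h.2]⟩

end NormalizedSumOfSquares

lemma pow_le_exp_mul_of_le_exp {x a : ℝ} (hx₀ : 0 ≤ x) (hx : x ≤ Real.exp a) (n : ℕ) :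
    x ^ n ≤ Real.exp (a * n) := by
  rw [mul_comm, Real.exp_nat_mul]
  exact pow_le_pow_left₀ hx₀ hx n

lemma exp_three_eighths_div_two_le : Real.exp (3 / 8) / 2 ≤ Real.exp (-1 / 4) := by
  have h58 : Real.exp (5 / 8) ≤ 2 :=
    (Real.exp_le_exp.mpr (by linarith [Real.log_two_gt_d9])).trans_eq (Real.exp_log two_pos)
  rw [div_le_iff₀ two_pos, show (3 / 8 : ℝ) = -1 / 4 + 5 / 8 by norm_num, Real.exp_add]
  gcongr

lemma sqrt_two_div_exp_one_le : √2 / Real.exp 1 ≤ Real.exp (-9 / 64) := by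
  rw [div_le_iff₀ (Real.exp_pos 1), ← Real.exp_add]
  have hsqrt : √2 ≤ 3 / 2 := Real.sqrt_le_iff.mpr ⟨by norm_num, by norm_num⟩
  linarith [Real.add_one_le_exp (-9 / 64 + 1 : ℝ)]

lemma sq_add_sq_lt_one : (Real.exp (3 / 8) / 2) ^ 2 + (√2 / Real.exp 1) ^ 2 < 1 := by
  have hp : (Real.exp (3 / 8) / 2) ^ 2 ≤ Real.exp (-1 / 2) :=
    (pow_le_exp_mul_of_le_exp (by positivity) exp_three_eighths_div_two_le 2).trans_eq
      (by norm_num)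
  have hexp_half : Real.exp (-1 / 2) ≤ 2 / 3 := by
    rw [neg_div, Real.exp_neg, inv_le_comm₀ (Real.exp_pos _) (by norm_num)]
    linarith [Real.add_one_le_exp (1 / 2 : ℝ)]
  have hq : (√2 / Real.exp 1) ^ 2 < 2 / 7 := by
    have hexp_one : 2.7 < Real.exp 1 := by linarith [Real.exp_one_gt_d9]
    rw [div_pow, Real.sq_sqrt zero_le_two]
    exact div_lt_div_of_pos_left two_pos (by norm_num) (by nlinarith)
  linarith

theorem stmt16_general (M : ℕ) [NeZero M] {Ω : Type*} [MeasurableSpace Ω] (P : Measure Ω)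
    (h : Ω → ZMod M → ℂ) (hh : IsGaussianWindow M P h) :
    P {ω | 1 / 2 < Real.sqrt (nsq M (h ω)) ∧ Real.sqrt (nsq M (h ω)) < 2} ≥
        ENNReal.ofReal (1 - Real.exp (-(M : ℝ) / 2) - Real.exp (-9 * (M : ℝ) / 32)) ∧
      ∃ C : ℝ, 0 < C ∧
        P {ω | 1 / 2 < Real.sqrt (nsq M (h ω)) ∧ Real.sqrt (nsq M (h ω)) < 2} ≥
          ENNReal.ofReal (1 - Real.exp (-C * M)) := by
  obtain ⟨u, hmeas, hind, hlaw, hu⟩ := hh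
  have hcard : Fintype.card (ZMod M × Bool) = 2 * M := by simp [mul_comm]
  have hnsq : ∀ ω, nsq M (h ω) = ∑ i, u i ω ^ 2 := fun ω => by
    simp [nsq, hu, Fintype.sum_prod_type, Complex.sq_norm, Complex.normSq_add_mul_I, add_comm]
  have hbound := ofReal_le_measure_sqrt_sum_sq_mem_Ioo hmeas hind fun i => by
    rw [hlaw, hcard]; congr 1; push_cast; ring
  simp only [hcard, ← hnsq] at hbound
  set p := Real.exp (3 / 8) / 2
  set q := √2 / Real.exp 1
  have hp : p ^ (2 * M) ≤ Real.exp (-(M : ℝ) / 2) :=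
    (pow_le_exp_mul_of_le_exp (by positivity) exp_three_eighths_div_two_le _).trans_eq
      (by push_cast; ring_nf)
  have hq : q ^ (2 * M) ≤ Real.exp (-9 * (M : ℝ) / 32) :=
    (pow_le_exp_mul_of_le_exp (by positivity) sqrt_two_div_exp_one_le _).trans_eq
      (by push_cast; ring_nf)
  have hpq : p ^ (2 * M) + q ^ (2 * M) ≤ (p ^ 2 + q ^ 2) ^ M := by
    rw [pow_mul, pow_mul]
    exact pow_add_pow_le (by positivity) (by positivity) (NeZero.ne M)
  refine ⟨hbound.trans' (ENNReal.ofReal_le_ofReal (by linarith)), -Real.log (p ^ 2 + q ^ 2),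
    neg_pos.mpr (Real.log_neg (by positivity) sq_add_sq_lt_one),
    hbound.trans' (ENNReal.ofReal_le_ofReal ?_)⟩
  rw [neg_neg, mul_comm, Real.exp_nat_mul, Real.exp_log (by positivity)]
  linarith

/-- Norm concentration for a complex Gaussian vector h ~ CN(0,(1/M)I):
P{1/2 < ‖h‖₂ < 2} ≥ 1 − e^{−M/2} − e^{−9M/32}; in particular ≥ 1 − e^{−CM} for some C > 0. -/
theorem stmt16 (M : ℕ) [NeZero M] {Ω : Type*} [MeasurableSpace Ω] (P : Measure Ω)
    [IsProbabilityMeasure P] (h : Ω → ZMod M → ℂ) (hh : IsGaussianWindow M P h) :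
    P {ω | 1 / 2 < Real.sqrt (nsq M (h ω)) ∧ Real.sqrt (nsq M (h ω)) < 2} ≥
        ENNReal.ofReal (1 - Real.exp (-(M : ℝ) / 2) - Real.exp (-9 * (M : ℝ) / 32)) ∧
      ∃ C : ℝ, 0 < C ∧
        P {ω | 1 / 2 < Real.sqrt (nsq M (h ω)) ∧ Real.sqrt (nsq M (h ω)) < 2} ≥
          ENNReal.ofReal (1 - Real.exp (-C * M)) :=
  stmt16_general M P h hh
end
end
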